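/- arXiv:0704.2961 — 2 statements merged into one kernel-verified Lean document; each statement's English description precedes it below -/
import Mathlib

section
/- Each two-qubit reduced density matrix ρ_{AY} of |M₄⟩ is separable, i.e., it is a convex combination of product states. -/
/-
|M₄⟩ is a superposition, with amplitudes α, β, γ of modulus 1/√6, of the three ways of
pairing qubit A with one of B, C, D. Tracing out C and D leaves a matrix that depends only on
these moduli and on 2 Re(β γ̄), and permuting B, C, D permutes α, β, γ; in all three cases
β γ̄ is ω/6 or ω²/6, so the three marginals coincide. That common matrix is the
equal-weight mixture of the six product states |x,1⟩ ⊗ |−x,1⟩ (x⁴ = 1), |0⟩ ⊗ |1⟩ and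
|1⟩ ⊗ |0⟩ (normalised).
-/

open scoped BigOperators
open Polynomial

/-- ω = exp(2πi/3), a primitive third root of unity. -/
noncomputable def omega : ℂ := Complex.exp (2 * Real.pi * Complex.I / 3)

/-- The four-qubit state |M₄⟩, given by its amplitudes in the computational basis. -/
noncomputable def M4 : Fin 2 → Fin 2 → Fin 2 → Fin 2 → ℂ := fun a b c d =>
  (Real.sqrt 6 : ℂ)⁻¹ *
    ((if (a, b, c, d) = (0, 0, 1, 1) ∨ (a, b, c, d) = (1, 1, 0, 0) then 1 else 0)
      + omega * (if (a, b, c, d) = (0, 1, 0, 1) ∨ (a, b, c, d) = (1, 0, 1, 0) then 1 else 0)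
      + (starRingEnd ℂ) omega *
          (if (a, b, c, d) = (0, 1, 1, 0) ∨ (a, b, c, d) = (1, 0, 0, 1) then 1 else 0))

/-- Reduced density matrix on qubits A,B (tracing out C,D), sesquilinear in two states. -/
noncomputable def redAB (ψ φ : Fin 2 → Fin 2 → Fin 2 → Fin 2 → ℂ) :
    Matrix (Fin 2 × Fin 2) (Fin 2 × Fin 2) ℂ := fun p q =>
  ∑ c : Fin 2, ∑ d : Fin 2, ψ p.1 p.2 c d * (starRingEnd ℂ) (φ q.1 q.2 c d)

/-- Reduced density matrix on qubits A,C (tracing out B,D). -/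
noncomputable def redAC (ψ φ : Fin 2 → Fin 2 → Fin 2 → Fin 2 → ℂ) :
    Matrix (Fin 2 × Fin 2) (Fin 2 × Fin 2) ℂ := fun p q =>
  ∑ b : Fin 2, ∑ d : Fin 2, ψ p.1 b p.2 d * (starRingEnd ℂ) (φ q.1 b q.2 d)

/-- Reduced density matrix on qubits A,D (tracing out B,C). -/
noncomputable def redAD (ψ φ : Fin 2 → Fin 2 → Fin 2 → Fin 2 → ℂ) :
    Matrix (Fin 2 × Fin 2) (Fin 2 × Fin 2) ℂ := fun p q =>
  ∑ b : Fin 2, ∑ c : Fin 2, ψ p.1 b c p.2 * (starRingEnd ℂ) (φ q.1 b c q.2)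

noncomputable def rhoAB (ψ : Fin 2 → Fin 2 → Fin 2 → Fin 2 → ℂ) := redAB ψ ψ
noncomputable def rhoAC (ψ : Fin 2 → Fin 2 → Fin 2 → Fin 2 → ℂ) := redAC ψ ψ
noncomputable def rhoAD (ψ : Fin 2 → Fin 2 → Fin 2 → Fin 2 → ℂ) := redAD ψ ψ

open Kronecker ComplexOrder in
/-- A two-qubit mixed state is separable if it is a finite convex combination of
tensor products of single-qubit density matrices. -/
def IsSeparableTwoQubit (σ : Matrix (Fin 2 × Fin 2) (Fin 2 × Fin 2) ℂ) : Prop :=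
  ∃ (n : ℕ) (p : Fin n → ℝ) (σ₁ σ₂ : Fin n → Matrix (Fin 2) (Fin 2) ℂ),
    (∀ k, 0 ≤ p k) ∧ (∑ k, p k = 1) ∧
    (∀ k, (σ₁ k).PosSemidef ∧ (σ₁ k).trace = 1) ∧
    (∀ k, (σ₂ k).PosSemidef ∧ (σ₂ k).trace = 1) ∧
    σ = ∑ k, (p k : ℂ) • (σ₁ k ⊗ₖ σ₂ k)

open ComplexConjugate Kronecker Matrix
open scoped ComplexOrder

lemma isPrimitiveRoot_omega : IsPrimitiveRoot omega 3 := by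
  simpa [omega] using Complex.isPrimitiveRoot_exp 3 (by norm_num)

lemma conj_omega : conj omega = omega ^ 2 := by
  have h := isPrimitiveRoot_omega
  rw [← RCLike.inv_eq_conj (h.norm'_eq_one (by norm_num))]
  exact DivisionMonoid.inv_eq_of_mul _ _ (by rw [← pow_succ', h.pow_eq_one])

lemma one_add_omega_add_omega_sq : 1 + omega + omega ^ 2 = 0 := by
  simpa [Finset.sum_range_succ] using isPrimitiveRoot_omega.geom_sum_eq_zero (by norm_num)

lemma omega_mul_conj : omega * conj omega = 1 := by
  rw [conj_omega, ← pow_succ', isPrimitiveRoot_omega.pow_eq_one]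

lemma omega_add_conj : omega + conj omega = -1 := by
  linear_combination conj_omega + one_add_omega_add_omega_sq

lemma omega_sq_add_conj_sq : omega * omega + conj omega * conj omega = -1 := by
  -- the left side is ω² + ω⁴ = ω² + ω
  linear_combination (conj omega + omega ^ 2) * conj_omega + one_add_omega_add_omega_sq
    + omega * isPrimitiveRoot_omega.pow_eq_one

/-- Amplitude `α` on |0011⟩, |1100⟩ (A agrees with B), `β` on |0101⟩, |1010⟩ (A with C) and
`γ` on |0110⟩, |1001⟩ (A with D). -/
noncomputable def pairingState (α β γ : ℂ) : Fin 2 → Fin 2 → Fin 2 → Fin 2 → ℂ :=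
  fun a b c d =>
    if b = a ∧ c ≠ a ∧ d ≠ a then α
    else if c = a ∧ b ≠ a ∧ d ≠ a then β
    else if d = a ∧ b ≠ a ∧ c ≠ a then γ
    else 0

lemma M4_eq_pairingState :
    M4 = pairingState (1 / Real.sqrt 6) (omega / Real.sqrt 6) (conj omega / Real.sqrt 6) := by
  funext a b c d
  fin_cases a <;> fin_cases b <;> fin_cases c <;> fin_cases d <;>
    simp [M4, pairingState, div_eq_inv_mul]

lemma pairingState_swap_BC (α β γ : ℂ) :
    (fun a b c d => pairingState α β γ a c b d) = pairingState β α γ := by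
  funext a b c d
  fin_cases a <;> fin_cases b <;> fin_cases c <;> fin_cases d <;> simp [pairingState]

lemma pairingState_cycle_BCD (α β γ : ℂ) :
    (fun a b c d => pairingState α β γ a c d b) = pairingState γ α β := by
  funext a b c d
  fin_cases a <;> fin_cases b <;> fin_cases c <;> fin_cases d <;> simp [pairingState]

lemma rhoAC_eq_rhoAB (ψ : Fin 2 → Fin 2 → Fin 2 → Fin 2 → ℂ) :
    rhoAC ψ = rhoAB (fun a b c d => ψ a c b d) := rfl

lemma rhoAD_eq_rhoAB (ψ : Fin 2 → Fin 2 → Fin 2 → Fin 2 → ℂ) :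
    rhoAD ψ = rhoAB (fun a b c d => ψ a c d b) := rfl

noncomputable def m4Marginal : Matrix (Fin 2 × Fin 2) (Fin 2 × Fin 2) ℂ := fun p q =>
  if p = q then (if p.1 = p.2 then 1 / 6 else 1 / 3)
  else if p.1 ≠ p.2 ∧ q.1 ≠ q.2 then -(1 / 6) else 0

lemma rhoAB_pairingState {α β γ : ℂ} (hα : α * conj α = 1 / 6) (hβ : β * conj β = 1 / 6)
    (hγ : γ * conj γ = 1 / 6) (hβγ : β * conj γ + γ * conj β = -(1 / 6)) :
    rhoAB (pairingState α β γ) = m4Marginal := by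
  funext ⟨a, b⟩ ⟨c, d⟩
  fin_cases a <;> fin_cases b <;> fin_cases c <;> fin_cases d <;>
    norm_num [rhoAB, redAB, pairingState, m4Marginal, Fin.sum_univ_two, hα, hβ, hγ, hβγ,
      add_comm (γ * _)]

lemma rhoAB_pairingState_div_sqrt_six {u v w : ℂ} (hu : u * conj u = 1) (hv : v * conj v = 1)
    (hw : w * conj w = 1) (hvw : v * conj w + w * conj v = -1) :
    rhoAB (pairingState (u / Real.sqrt 6) (v / Real.sqrt 6) (w / Real.sqrt 6)) = m4Marginal := by
  have h6 : (Real.sqrt 6 : ℂ) ^ 2 = 6 := by norm_cast; simp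
  have hconj (z : ℂ) : conj (z / Real.sqrt 6) = conj z / Real.sqrt 6 := by
    rw [map_div₀, Complex.conj_ofReal]
  have hmul (y z : ℂ) : y / Real.sqrt 6 * (z / Real.sqrt 6) = y * z / 6 := by
    rw [div_mul_div_comm, ← sq, h6]
  refine rhoAB_pairingState ?_ ?_ ?_ ?_ <;> simp only [hconj, hmul]
  · linear_combination hu / 6
  · linear_combination hv / 6
  · linear_combination hw / 6
  · linear_combination hvw / 6

noncomputable def projState {n : Type*} [Fintype n] (v : n → ℂ) : Matrix n n ℂ :=
  (star v ⬝ᵥ v)⁻¹ • vecMulVec v (star v)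

lemma projState_posSemidef {n : Type*} [Fintype n] (v : n → ℂ) : (projState v).PosSemidef :=
  (posSemidef_vecMulVec_self_star v).smul (inv_nonneg.mpr (dotProduct_star_self_nonneg v))

lemma trace_projState {n : Type*} [Fintype n] {v : n → ℂ} (hv : v ≠ 0) :
    (projState v).trace = 1 := by
  rw [projState, trace_smul, trace_vecMulVec, dotProduct_comm, smul_eq_mul,
    inv_mul_cancel₀ (dotProduct_self_star_eq_zero.not.mpr hv)]

/- Averaging |x,1⟩⟨x,1| ⊗ |−x,1⟩⟨−x,1| over x ∈ {1, i, −1, −i} kills every coherence except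
|01⟩⟨10| and |10⟩⟨01|, which come with sign −1; the last two product states supply the missing
population of |01⟩ and |10⟩. -/
noncomputable def m4FactorA : Fin 6 → Fin 2 → ℂ :=
  ![![1, 1], ![Complex.I, 1], ![-1, 1], ![-Complex.I, 1], ![1, 0], ![0, 1]]

noncomputable def m4FactorB : Fin 6 → Fin 2 → ℂ :=
  ![![-1, 1], ![-Complex.I, 1], ![1, 1], ![Complex.I, 1], ![0, 1], ![1, 0]]

lemma m4Marginal_eq_sum :
    m4Marginal =
      ∑ k, ((1 / 6 : ℝ) : ℂ) • (projState (m4FactorA k) ⊗ₖ projState (m4FactorB k)) := by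
  funext ⟨a, b⟩ ⟨c, d⟩
  fin_cases a <;> fin_cases b <;> fin_cases c <;> fin_cases d <;>
    simp [m4Marginal, projState, m4FactorA, m4FactorB, Fin.sum_univ_succ, dotProduct, vecMulVec] <;>
    norm_num [Complex.ext_iff]

lemma isSeparableTwoQubit_m4Marginal : IsSeparableTwoQubit m4Marginal := by
  refine ⟨6, fun _ => 1 / 6, fun k => projState (m4FactorA k), fun k => projState (m4FactorB k),
    fun _ => by norm_num, by norm_num, fun k => ⟨projState_posSemidef _, trace_projState ?_⟩,
    fun k => ⟨projState_posSemidef _, trace_projState ?_⟩, m4Marginal_eq_sum⟩ <;>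
  fin_cases k <;> simp [m4FactorA, m4FactorB, funext_iff, Fin.forall_fin_two]

/-- Each two-qubit reduced density matrix ρ_{AY} of |M₄⟩ is separable. -/
theorem M4_reduced_separable :
    IsSeparableTwoQubit (rhoAB M4) ∧ IsSeparableTwoQubit (rhoAC M4) ∧ IsSeparableTwoQubit (rhoAD M4) := by
  have h1 : (1 : ℂ) * conj 1 = 1 := by simp
  have hω : omega * conj omega = 1 := omega_mul_conj
  have hω' : conj omega * conj (conj omega) = 1 := by rw [mul_comm, Complex.conj_conj, hω]
  have hAB := rhoAB_pairingState_div_sqrt_six h1 hω hω' (by simpa using omega_sq_add_conj_sq)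
  have hAC := rhoAB_pairingState_div_sqrt_six hω h1 hω' (by simpa using omega_add_conj)
  have hAD := rhoAB_pairingState_div_sqrt_six hω' h1 hω (by simpa [add_comm] using omega_add_conj)
  rw [rhoAC_eq_rhoAB, rhoAD_eq_rhoAB, M4_eq_pairingState, pairingState_swap_BC,
    pairingState_cycle_BCD, hAB, hAC, hAD]
  exact ⟨isSeparableTwoQubit_m4Marginal, isSeparableTwoQubit_m4Marginal,
    isSeparableTwoQubit_m4Marginal⟩
end

section
/- If A is a square matrix all of whose eigenvalues λ satisfy 0 < λ < 1, then for a variation A ↦ A + δA, the first-order variation of log A is δ log A = ∫₀¹ [I − t(I−A)]^{-1} δA [I − t(I−A)]^{-1} dt. -/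
open scoped BigOperators

/-- The matrix logarithm defined by the series log A = −Σ_{n≥1} (I−A)ⁿ/n,
convergent when the spectral radius of I−A is less than 1. -/
noncomputable def mlog {N : ℕ} (M : Matrix (Fin N) (Fin N) ℂ) : Matrix (Fin N) (Fin N) ℂ :=
  -∑' n : ℕ, (((n + 1 : ℕ) : ℂ))⁻¹ • (1 - M) ^ (n + 1)

/-!
Write `E = I − A`, so that `log (A + s δA) = −∑ (E − s δA)ⁿ⁺¹ / (n + 1)`. All eigenvalues of `E`
lie in the open unit disc, so Gelfand's formula gives `‖Eⁿ‖ ≤ C rⁿ` with `r < 1`, and a bound of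
the same kind holds uniformly for all small perturbations `E − s δA`. Hence the series may be
differentiated termwise at `s = 0`, with derivative `∑ (n + 1)⁻¹ ∑_{i+j=n} Eⁱ δA Eʲ`.
On the other hand `(I − tE)⁻¹ = ∑ tⁿ Eⁿ`, so the integrand is the Cauchy product
`∑ tⁿ ∑_{i+j=n} Eⁱ δA Eʲ`, and integrating it termwise over `[0, 1]` gives the same series.
-/

open Finset Filter Topology Interval MeasureTheory

def powSuccDeriv {R : Type*} [Semiring R] (x h : R) (n : ℕ) : R :=
  ∑ p ∈ antidiagonal n, x ^ p.1 * h * x ^ p.2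

theorem powSuccDeriv_eq_sum_range {R : Type*} [Semiring R] (x h : R) (n : ℕ) :
    powSuccDeriv x h n = ∑ i ∈ range (n + 1), x ^ (n - i) * h * x ^ i := by
  rw [powSuccDeriv, ← Nat.sum_antidiagonal_swap]
  simp only [Prod.fst_swap, Prod.snd_swap]
  exact Nat.sum_antidiagonal_eq_sum_range_succ (fun i j => x ^ j * h * x ^ i) n

theorem powSuccDeriv_neg {R : Type*} [Ring R] (x h : R) (n : ℕ) :
    powSuccDeriv x (-h) n = -powSuccDeriv x h n := by
  simp [powSuccDeriv]

theorem powSuccDeriv_smul {𝕜 R : Type*} [CommSemiring 𝕜] [Semiring R] [Algebra 𝕜 R]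
    (t : 𝕜) (x h : R) (n : ℕ) : powSuccDeriv (t • x) h n = t ^ n • powSuccDeriv x h n := by
  rw [powSuccDeriv, powSuccDeriv, smul_sum]
  refine sum_congr rfl fun p hp => ?_
  rw [← mem_antidiagonal.mp hp, smul_pow, smul_pow, smul_mul_assoc, smul_mul_assoc,
    mul_smul_comm, smul_smul, pow_add]

section NormedRing

variable {R : Type*} [NormedRing R] {x : R} {C r : ℝ}

/-- The factor `xⁿ` in front is what makes the induction on `k` close:
`xⁿ (x + h)ᵏ⁺¹ = xⁿ⁺¹ (x + h)ᵏ + xⁿ h (x + h)ᵏ`. -/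
theorem norm_pow_mul_add_pow_le (hx : ∀ n, ‖x ^ n‖ ≤ C * r ^ n) (h : R) (k n : ℕ) :
    ‖x ^ n * (x + h) ^ k‖ ≤ C * r ^ n * (r + C * ‖h‖) ^ k := by
  induction k generalizing n with
  | zero => simpa using hx n
  | succ k ih =>
    have hCr : 0 ≤ C * r ^ n := (norm_nonneg _).trans (hx n)
    have hk : ‖(x + h) ^ k‖ ≤ C * (r + C * ‖h‖) ^ k := by simpa using ih 0
    calc ‖x ^ n * (x + h) ^ (k + 1)‖
        = ‖x ^ (n + 1) * (x + h) ^ k + x ^ n * h * (x + h) ^ k‖ := by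
          rw [pow_succ' (x + h), ← mul_assoc, mul_add, pow_succ, add_mul]
      _ ≤ ‖x ^ (n + 1) * (x + h) ^ k‖ + ‖x ^ n‖ * ‖h‖ * ‖(x + h) ^ k‖ :=
          (norm_add_le _ _).trans (add_le_add_right norm_mul₃_le _)
      _ ≤ C * r ^ (n + 1) * (r + C * ‖h‖) ^ k
            + C * r ^ n * ‖h‖ * (C * (r + C * ‖h‖) ^ k) := by
          gcongr
          · exact ih (n + 1)
          · exact hx n
      _ = C * r ^ n * (r + C * ‖h‖) ^ (k + 1) := by ring

theorem norm_add_pow_le (hx : ∀ n, ‖x ^ n‖ ≤ C * r ^ n) (h : R) (k : ℕ) :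
    ‖(x + h) ^ k‖ ≤ C * (r + C * ‖h‖) ^ k := by
  simpa using norm_pow_mul_add_pow_le hx h k 0

theorem norm_powSuccDeriv_le (hx : ∀ n, ‖x ^ n‖ ≤ C * r ^ n) (h : R) (n : ℕ) :
    ‖powSuccDeriv x h n‖ ≤ (n + 1) * (C ^ 2 * ‖h‖ * r ^ n) := by
  have hCr : ∀ k, 0 ≤ C * r ^ k := fun k => (norm_nonneg _).trans (hx k)
  have hterm : ∀ p ∈ antidiagonal n, ‖x ^ p.1 * h * x ^ p.2‖ ≤ C ^ 2 * ‖h‖ * r ^ n := by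
    intro p hp
    rw [← mem_antidiagonal.mp hp]
    calc ‖x ^ p.1 * h * x ^ p.2‖ ≤ ‖x ^ p.1‖ * ‖h‖ * ‖x ^ p.2‖ := norm_mul₃_le
      _ ≤ C * r ^ p.1 * ‖h‖ * (C * r ^ p.2) := by
          gcongr
          · exact mul_nonneg (hCr _) (norm_nonneg _)
          · exact hx _
          · exact hx _
      _ = C ^ 2 * ‖h‖ * r ^ (p.1 + p.2) := by ring
  calc ‖powSuccDeriv x h n‖ ≤ ∑ p ∈ antidiagonal n, ‖x ^ p.1 * h * x ^ p.2‖ := norm_sum_le _ _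
    _ ≤ ∑ _p ∈ antidiagonal n, C ^ 2 * ‖h‖ * r ^ n := sum_le_sum hterm
    _ = (n + 1) * (C ^ 2 * ‖h‖ * r ^ n) := by simp

theorem summable_norm_powSuccDeriv (hr0 : 0 ≤ r) (hr1 : r < 1)
    (hx : ∀ n, ‖x ^ n‖ ≤ C * r ^ n) (h : R) :
    Summable fun n => ‖powSuccDeriv x h n‖ := by
  have hgeom : Summable fun n : ℕ => ((n : ℝ) + 1) * r ^ n := by
    simpa [add_mul] using
      (summable_pow_mul_geometric_of_norm_lt_one 1 (by rwa [Real.norm_of_nonneg hr0])).add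
        (summable_geometric_of_lt_one hr0 hr1)
  refine .of_nonneg_of_le (fun _ => norm_nonneg _) (norm_powSuccDeriv_le hx h) ?_
  exact (hgeom.mul_left (C ^ 2 * ‖h‖)).congr fun n => by ring

variable [CompleteSpace R]

theorem one_sub_mul_tsum_pow (hx : Summable fun n => ‖x ^ n‖) : (1 - x) * ∑' n, x ^ n = 1 := by
  have hlim : Tendsto (fun n => (1 - x) * ∑ i ∈ range n, x ^ i) atTop
      (𝓝 ((1 - x) * ∑' n, x ^ n)) :=
    hx.of_norm.hasSum.tendsto_sum_nat.const_mul (1 - x)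
  refine tendsto_nhds_unique hlim ?_
  simp_rw [mul_neg_geom_sum]
  simpa using hx.of_norm.tendsto_atTop_zero.const_sub 1

theorem tsum_pow_mul_mul_tsum_pow (hx : Summable fun n => ‖x ^ n‖) (h : R) :
    (∑' n, x ^ n) * h * ∑' n, x ^ n = ∑' n, powSuccDeriv x h n := by
  have hxh : Summable fun n => ‖x ^ n * h‖ :=
    (hx.mul_right ‖h‖).of_nonneg_of_le (fun _ => norm_nonneg _) fun _ => norm_mul_le _ _
  rw [← hx.of_norm.tsum_mul_right h,
    tsum_mul_tsum_eq_tsum_sum_antidiagonal_of_summable_norm hxh hx]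
  rfl

end NormedRing

theorem hasDerivAt_add_smul_pow_succ {𝕜 R : Type*} [NontriviallyNormedField 𝕜] [NormedRing R]
    [NormedAlgebra 𝕜 R] (x h : R) (n : ℕ) (z : 𝕜) :
    HasDerivAt (fun w : 𝕜 => (x + w • h) ^ (n + 1)) (powSuccDeriv (x + z • h) h n) z := by
  have hline : HasDerivAt (fun w : 𝕜 => x + w • h) h z := by
    simpa using ((hasDerivAt_id z).smul_const h).const_add x
  rw [hasDerivAt_iff_hasFDerivAt] at hline ⊢
  refine (hline.fun_pow' (n + 1)).congr_fderiv ?_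
  ext
  simp [powSuccDeriv_eq_sum_range]

theorem hasDerivAt_tsum_inv_smul_add_smul_pow_succ {𝕜 R : Type*} [RCLike 𝕜] [NormedRing R]
    [NormedAlgebra 𝕜 R] [CompleteSpace R] {x : R} {C r : ℝ} (hr0 : 0 ≤ r) (hr1 : r < 1)
    (hx : ∀ n, ‖x ^ n‖ ≤ C * r ^ n) (h : R) :
    HasDerivAt (fun z : 𝕜 => ∑' n : ℕ, ((n + 1 : ℕ) : 𝕜)⁻¹ • (x + z • h) ^ (n + 1))
      (∑' n : ℕ, ((n + 1 : ℕ) : 𝕜)⁻¹ • powSuccDeriv x h n) 0 := by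
  have hC : 0 ≤ C := by simpa using (norm_nonneg _).trans (hx 0)
  obtain ⟨r', hrr', hr'1⟩ := exists_between hr1
  set ε := (r' - r) / (C * ‖h‖ + 1)
  have hε : 0 < ε := div_pos (by linarith) (by positivity)
  have hball : ∀ z ∈ Metric.ball (0 : 𝕜) ε, ∀ k, ‖(x + z • h) ^ k‖ ≤ C * r' ^ k := by
    intro z hz k
    have hz' : C * ‖z • h‖ ≤ r' - r := by
      rw [mem_ball_zero_iff] at hz
      calc C * ‖z • h‖ = ‖z‖ * (C * ‖h‖) := by rw [norm_smul]; ring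
        _ ≤ ε * (C * ‖h‖ + 1) := by gcongr; linarith
        _ = r' - r := div_mul_cancel₀ _ (by positivity)
    calc ‖(x + z • h) ^ k‖ ≤ C * (r + C * ‖z • h‖) ^ k := norm_add_pow_le hx _ k
      _ ≤ C * r' ^ k := by gcongr; linarith
  have hcoeff : ∀ n : ℕ, ‖((n + 1 : ℕ) : 𝕜)⁻¹‖ = ((n : ℝ) + 1)⁻¹ := fun n => by
    rw [norm_inv, RCLike.norm_natCast]; push_cast; rfl
  refine (hasDerivAt_tsum_of_isPreconnected
    (g := fun n z => ((n + 1 : ℕ) : 𝕜)⁻¹ • (x + z • h) ^ (n + 1))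
    (g' := fun n z => ((n + 1 : ℕ) : 𝕜)⁻¹ • powSuccDeriv (x + z • h) h n)
    ((summable_geometric_of_lt_one (hr0.trans hrr'.le) hr'1).mul_left (C ^ 2 * ‖h‖))
    Metric.isOpen_ball (convex_ball 0 ε).isPreconnected
    (fun n z _ => (hasDerivAt_add_smul_pow_succ x h n z).const_smul ((n + 1 : ℕ) : 𝕜)⁻¹)
    (fun n z hz => ?_) (Metric.mem_ball_self hε) ?_ (Metric.mem_ball_self hε)).congr_deriv
    (by simp)
  · rw [norm_smul, hcoeff]
    calc ((n : ℝ) + 1)⁻¹ * ‖powSuccDeriv (x + z • h) h n‖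
        ≤ ((n : ℝ) + 1)⁻¹ * ((n + 1) * (C ^ 2 * ‖h‖ * r' ^ n)) := by
          gcongr; exact norm_powSuccDeriv_le (hball z hz) h n
      _ = C ^ 2 * ‖h‖ * r' ^ n := by field_simp
  · refine .of_norm_bounded ((summable_geometric_of_lt_one hr0 hr1).mul_left (C * r)) fun n => ?_
    rw [zero_smul, add_zero, norm_smul, hcoeff]
    calc ((n : ℝ) + 1)⁻¹ * ‖x ^ (n + 1)‖ ≤ 1 * (C * r ^ (n + 1)) := by
          gcongr
          · exact inv_le_one_of_one_le₀ (by simp)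
          · exact hx _
      _ = C * r * r ^ n := by ring

theorem integral_tsum_pow_smul {E : Type*} [NormedAddCommGroup E] [NormedSpace ℂ E]
    [CompleteSpace E] {P : ℕ → E} (hP : Summable fun n => ‖P n‖) :
    ∫ t in (0 : ℝ)..1, ∑' n, (t : ℂ) ^ n • P n = ∑' n, ((n + 1 : ℕ) : ℂ)⁻¹ • P n := by
  have hterm : ∀ n : ℕ, ∫ t in (0 : ℝ)..1, (t : ℂ) ^ n • P n = ((n + 1 : ℕ) : ℂ)⁻¹ • P n := by
    intro n
    rw [intervalIntegral.integral_smul_const]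
    congr 1
    simp_rw [← Complex.ofReal_pow]
    rw [intervalIntegral.integral_ofReal, integral_pow]
    push_cast
    ring
  have hle : ∀ n, ∀ t ∈ Ι (0 : ℝ) 1, ‖(t : ℂ) ^ n • P n‖ ≤ ‖P n‖ := by
    intro n t ht
    rw [Set.uIoc_of_le zero_le_one] at ht
    rw [norm_smul, norm_pow, Complex.norm_real, Real.norm_of_nonneg ht.1.le]
    exact mul_le_of_le_one_left (norm_nonneg _) (pow_le_one₀ ht.1.le ht.2)
  have hsum := intervalIntegral.hasSum_integral_of_dominated_convergence (μ := volume)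
    (fun n _ => ‖P n‖)
    (fun n => (by fun_prop : Continuous fun t : ℝ => (t : ℂ) ^ n • P n).aestronglyMeasurable)
    (fun n => ae_of_all _ (hle n)) (ae_of_all _ fun _ _ => hP) intervalIntegrable_const
    (ae_of_all _ fun t ht =>
      (hP.of_nonneg_of_le (fun _ => norm_nonneg _) fun n => hle n t ht).of_norm.hasSum)
  simpa only [hterm] using hsum.tsum_eq.symm

theorem norm_lt_one_of_mem_spectrum_one_sub {R : Type*} [Ring R] [Algebra ℂ R] {a : R}
    (ha : ∀ μ ∈ spectrum ℂ a, 0 < μ.re ∧ μ.re < 1 ∧ μ.im = 0) :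
    ∀ μ ∈ spectrum ℂ (1 - a), ‖μ‖ < 1 := by
  intro μ hμ
  rw [← map_one (algebraMap ℂ R), ← spectrum.singleton_sub_eq] at hμ
  obtain ⟨_, rfl, ν, hν, rfl⟩ := hμ
  obtain ⟨hre0, hre1, him⟩ := ha ν hν
  have hreal : (1 : ℂ) - ν = ((1 - ν.re : ℝ) : ℂ) := by apply Complex.ext <;> simp [him]
  change ‖1 - ν‖ < 1
  rw [hreal, Complex.norm_real, Real.norm_of_nonneg (by linarith)]
  linarith

section BanachAlgebra

variable {A : Type*} [NormedRing A] [NormedAlgebra ℂ A] [CompleteSpace A] {a : A}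

theorem spectralRadius_lt_one_of_forall_norm_lt_one (ha : ∀ z ∈ spectrum ℂ a, ‖z‖ < 1) :
    spectralRadius ℂ a < 1 := by
  rcases (spectrum ℂ a).eq_empty_or_nonempty with he | hne
  · simp [spectralRadius, he]
  · obtain ⟨z, hz, hza⟩ := spectrum.exists_nnnorm_eq_spectralRadius_of_nonempty hne
    rw [← hza]
    exact_mod_cast ha z hz

theorem exists_norm_pow_le_geometric (ha : spectralRadius ℂ a < 1) :
    ∃ C r : ℝ, 0 ≤ r ∧ r < 1 ∧ ∀ n, ‖a ^ n‖ ≤ C * r ^ n := by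
  obtain ⟨ρ, hρa, hρ1⟩ := exists_between ha
  have hρ : ρ ≠ ⊤ := (hρ1.trans ENNReal.one_lt_top).ne
  have hr0 : 0 < ρ.toReal := ENNReal.toReal_pos (pos_of_gt hρa).ne' hρ
  have hr1 : ρ.toReal < 1 := by
    simpa using (ENNReal.toReal_lt_toReal hρ ENNReal.one_ne_top).mpr hρ1
  have hev : ∀ᶠ n : ℕ in atTop, ‖a ^ n‖ ≤ 1 * ‖ρ.toReal ^ n‖ := by
    have hgelfand := spectrum.pow_norm_pow_one_div_tendsto_nhds_spectralRadius a
    filter_upwards [hgelfand.eventually_lt_const hρa, eventually_ge_atTop 1] with n hn hn1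
    rw [ENNReal.ofReal_lt_iff_lt_toReal (by positivity) hρ, one_div] at hn
    rw [one_mul, Real.norm_of_nonneg (by positivity),
      ← Real.rpow_inv_natCast_pow (norm_nonneg (a ^ n)) (by omega : n ≠ 0)]
    exact pow_le_pow_left₀ (by positivity) hn.le n
  obtain ⟨C, hC⟩ := (Asymptotics.isBigO_cofinite_iff fun n hn => absurd hn (by positivity)).mp
    (Asymptotics.IsBigO.of_bound 1 (Nat.cofinite_eq_atTop ▸ hev))
  exact ⟨C, ρ.toReal, hr0.le, hr1, fun n => by simpa [abs_of_pos hr0] using hC n⟩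

end BanachAlgebra

section Matrix

-- Any submultiplicative norm would do; all of them induce the product topology used by `mlog`.
attribute [local instance] Matrix.linftyOpNormedAddCommGroup Matrix.linftyOpNormedRing
  Matrix.linftyOpNormedAlgebra

theorem Matrix.norm_apply_le_linfty_opNorm {m n α : Type*} [Fintype m] [Fintype n]
    [NormedAddCommGroup α] (X : Matrix m n α) (i : m) (j : n) : ‖X i j‖ ≤ ‖X‖ := by
  have hnn : ‖X i j‖₊ ≤ ‖X‖₊ := by
    rw [Matrix.linfty_opNNNorm_def]
    exact (single_le_sum (fun _ _ => zero_le) (mem_univ j)).trans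
      (le_sup (f := fun i => ∑ j, ‖X i j‖₊) (mem_univ i))
  exact_mod_cast hnn

variable {N : ℕ}

noncomputable def Matrix.entryCLM (i j : Fin N) : Matrix (Fin N) (Fin N) ℂ →L[ℂ] ℂ :=
  (Matrix.entryLinearMap ℂ ℂ i j).toContinuousLinearMap

theorem hasDerivAt_mlog_add_smul_apply {A : Matrix (Fin N) (Fin N) ℂ}
    (hA : ∀ μ ∈ spectrum ℂ (1 - A), ‖μ‖ < 1) (δA : Matrix (Fin N) (Fin N) ℂ) (i j : Fin N) :
    HasDerivAt (fun s : ℝ => mlog (A + (s : ℂ) • δA) i j)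
      ((∑' n : ℕ, ((n + 1 : ℕ) : ℂ)⁻¹ • powSuccDeriv (1 - A) δA n) i j) 0 := by
  obtain ⟨C, r, hr0, hr1, hpow⟩ :=
    exists_norm_pow_le_geometric (spectralRadius_lt_one_of_forall_norm_lt_one hA)
  have hlog := (hasDerivAt_tsum_inv_smul_add_smul_pow_succ (𝕜 := ℂ) hr0 hr1 hpow (-δA)).neg
  have hentry := (Matrix.entryCLM i j).hasFDerivAt.comp_hasDerivAt _ hlog
  rw [← Complex.ofReal_zero] at hentry
  convert hentry.comp_ofReal using 1
  · funext s
    simp only [Function.comp_apply, Pi.neg_apply, smul_neg, ← sub_eq_add_neg, sub_sub]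
    rfl
  · simp_rw [powSuccDeriv_neg, smul_neg, tsum_neg, neg_neg]
    rfl

theorem integral_inv_mul_mul_inv_apply {E : Matrix (Fin N) (Fin N) ℂ}
    (hE : ∀ μ ∈ spectrum ℂ E, ‖μ‖ < 1) (D : Matrix (Fin N) (Fin N) ℂ) (i j : Fin N) :
    ∫ t in (0 : ℝ)..1, ((1 - (t : ℂ) • E)⁻¹ * D * (1 - (t : ℂ) • E)⁻¹) i j
      = (∑' n : ℕ, ((n + 1 : ℕ) : ℂ)⁻¹ • powSuccDeriv E D n) i j := by
  obtain ⟨C, r, hr0, hr1, hpow⟩ :=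
    exists_norm_pow_le_geometric (spectralRadius_lt_one_of_forall_norm_lt_one hE)
  set π := Matrix.entryCLM (N := N) i j
  have hP := summable_norm_powSuccDeriv hr0 hr1 hpow D
  have hπP : Summable fun n => ‖π (powSuccDeriv E D n)‖ :=
    hP.of_nonneg_of_le (fun _ => norm_nonneg _) fun n => Matrix.norm_apply_le_linfty_opNorm _ i j
  have hseries : ∀ t ∈ [[(0 : ℝ), 1]], ((1 - (t : ℂ) • E)⁻¹ * D * (1 - (t : ℂ) • E)⁻¹) i j
      = ∑' n, (t : ℂ) ^ n • π (powSuccDeriv E D n) := by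
    intro t ht
    rw [Set.uIcc_of_le zero_le_one] at ht
    have ht1 : ‖(t : ℂ)‖ ≤ 1 := by
      rw [Complex.norm_real, Real.norm_of_nonneg ht.1]; exact ht.2
    have hpow_le : ∀ n, ‖(t : ℂ) ^ n‖ ≤ 1 := fun n => by
      rw [norm_pow]; exact pow_le_one₀ (norm_nonneg _) ht1
    have hgeom : Summable fun n => ‖((t : ℂ) • E) ^ n‖ := by
      refine ((summable_geometric_of_lt_one hr0 hr1).mul_left C).of_nonneg_of_le
        (fun _ => norm_nonneg _) fun n => ?_
      rw [smul_pow, norm_smul]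
      exact (mul_le_of_le_one_left (norm_nonneg _) (hpow_le n)).trans (hpow n)
    have hsmul : Summable fun n => (t : ℂ) ^ n • powSuccDeriv E D n :=
      .of_norm_bounded hP fun n => by
        rw [norm_smul]; exact mul_le_of_le_one_left (norm_nonneg _) (hpow_le n)
    rw [Matrix.inv_eq_right_inv (one_sub_mul_tsum_pow hgeom), tsum_pow_mul_mul_tsum_pow hgeom]
    simp_rw [powSuccDeriv_smul]
    exact (π.map_tsum hsmul).trans (tsum_congr fun n => π.map_smul _ _)
  have hlogSeries : Summable fun n => ((n + 1 : ℕ) : ℂ)⁻¹ • powSuccDeriv E D n :=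
    .of_norm_bounded hP fun n => by
      rw [norm_smul, norm_inv, Complex.norm_natCast]
      exact mul_le_of_le_one_left (norm_nonneg _) (inv_le_one_of_one_le₀ (by simp))
  rw [intervalIntegral.integral_congr hseries, integral_tsum_pow_smul hπP]
  exact ((π.map_tsum hlogSeries).trans (tsum_congr fun n => π.map_smul _ _)).symm

end Matrix

/-- If all eigenvalues λ of A satisfy 0 < λ < 1, then the first-order variation of log A in
the direction δA is ∫₀¹ [I − t(I−A)]⁻¹ δA [I − t(I−A)]⁻¹ dt (stated entrywise): the
derivative at s = 0 of s ↦ log(A + s·δA) equals that integral. -/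
theorem firstVariation_mlog {N : ℕ} (A δA : Matrix (Fin N) (Fin N) ℂ)
    (hspec : ∀ μ ∈ spectrum ℂ A, 0 < μ.re ∧ μ.re < 1 ∧ μ.im = 0) :
    ∀ i j, HasDerivAt (fun s : ℝ => mlog (A + (s : ℂ) • δA) i j)
      (∫ t in (0:ℝ)..1,
        ((1 - (t : ℂ) • (1 - A))⁻¹ * δA * (1 - (t : ℂ) • (1 - A))⁻¹) i j) 0 := by
  intro i j
  have hE := norm_lt_one_of_mem_spectrum_one_sub hspec
  rw [integral_inv_mul_mul_inv_apply hE]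
  exact hasDerivAt_mlog_add_smul_apply hE δA i j
end
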